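/- With the notation of the zero-inflated truncated bivariate likelihood ℒ(σ,y) and the measure μ = δ₀⊗δ₀ + δ₀⊗λ + λ⊗δ₀ + λ⊗λ, for every σ ∈ [-1+δ, 1-δ] and every positive integer l ≤ 3, one has ∫_{ℝ²} ∂_σ^l ℒ(σ,y) dμ(y) = ∂_σ^l ∫_{ℝ²} ℒ(σ,y) dμ(y) = 0. -/

import Mathlib

/-! For `|σ| < 1` the density factors as a standard normal density times a normal conditional
density, so both marginals of `bivGauss σ` are standard normal, independently of `σ`. Writing each
integral over the complement of a truncation interval as the full integral minus the integral over
the interval, `φ₀₀`, `φ₀₁`, `φ₁₀` become `σ`-independent terms plus or minus integrals of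
`bivGauss σ` over the rectangle `Q = [a₁,b₁] × [a₂,b₂]` or over its sections. Hence
`∫ ℒ(σ,·) dμ = 1` on `(-1, 1)`, and `∂_σ^l ℒ(σ,y)` is obtained by differentiating under these
integrals over compact sets, where the `σ`-derivatives of the smooth density are bounded.
Integrated against `μ`, the four pieces contribute `R - R - R + R = 0` with
`R = ∫_Q ∂_σ^l bivGauss` (Fubini for the two middle terms). -/

open Real Set MeasureTheory

/-- Bivariate standard Gaussian density with correlation `σ`. -/
noncomputable def bivGauss (σ x y : ℝ) : ℝ :=
  (1 / (2 * π * Real.sqrt (1 - σ ^ 2))) *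
    Real.exp (-(x ^ 2 - 2 * σ * x * y + y ^ 2) / (2 * (1 - σ ^ 2)))

/-- `φ₀₁(σ,y)`: first coordinate truncated away. -/
noncomputable def phi01 (a₁ b₁ σ y : ℝ) : ℝ :=
  ∫ x in (Icc a₁ b₁)ᶜ, bivGauss σ x y

/-- `φ₁₀(σ,x)`: second coordinate truncated away. -/
noncomputable def phi10 (a₂ b₂ σ x : ℝ) : ℝ :=
  ∫ y in (Icc a₂ b₂)ᶜ, bivGauss σ x y

/-- `φ₀₀(σ)`: both coordinates truncated away. -/
noncomputable def phi00 (a₁ b₁ a₂ b₂ σ : ℝ) : ℝ :=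
  ∫ x in (Icc a₁ b₁)ᶜ, ∫ y in (Icc a₂ b₂)ᶜ, bivGauss σ x y

/-- The measure `μ = δ₀⊗δ₀ + δ₀⊗λ + λ⊗δ₀ + λ⊗λ` on `ℝ²`. -/
noncomputable def muZI : Measure (ℝ × ℝ) :=
  (Measure.dirac (0 : ℝ)).prod (Measure.dirac (0 : ℝ)) +
  (Measure.dirac (0 : ℝ)).prod volume +
  volume.prod (Measure.dirac (0 : ℝ)) +
  volume.prod volume

/-- Zero-inflated truncated bivariate likelihood. -/
noncomputable def ZIL (a₁ b₁ a₂ b₂ σ : ℝ) (y : ℝ × ℝ) : ℝ :=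
  Set.indicator {y : ℝ × ℝ | y.1 = 0 ∧ y.2 = 0}
    (fun _ => phi00 a₁ b₁ a₂ b₂ σ) y
  + Set.indicator {y : ℝ × ℝ | y.1 = 0 ∧ (y.2 ∈ Icc a₂ b₂ ∧ y.2 ≠ 0)}
    (fun y => phi01 a₁ b₁ σ y.2) y
  + Set.indicator {y : ℝ × ℝ | (y.1 ∈ Icc a₁ b₁ ∧ y.1 ≠ 0) ∧ y.2 = 0}
    (fun y => phi10 a₂ b₂ σ y.1) y
  + Set.indicator {y : ℝ × ℝ | (y.1 ∈ Icc a₁ b₁ ∧ y.1 ≠ 0) ∧ (y.2 ∈ Icc a₂ b₂ ∧ y.2 ≠ 0)}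
    (fun y => bivGauss σ y.1 y.2) y

open ProbabilityTheory Function
open scoped ContDiff

section PartialDeriv

variable {E : Type*} [NormedAddCommGroup E] [NormedSpace ℝ E]

noncomputable def iteratedPartialFst (f : ℝ × E → ℝ) : ℕ → ℝ × E → ℝ
  | 0 => f
  | k + 1 => fun p => fderiv ℝ (iteratedPartialFst f k) p (1, 0)

variable {f : ℝ × E → ℝ} {W : Set (ℝ × E)}

lemma ContDiffOn.iteratedPartialFst (hf : ContDiffOn ℝ ∞ f W) (hW : IsOpen W) (k : ℕ) :
    ContDiffOn ℝ ∞ (iteratedPartialFst f k) W := by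
  induction k with
  | zero => exact hf
  | succ k ih => exact (ih.fderiv_of_isOpen hW le_rfl).clm_apply contDiffOn_const

lemma hasDerivAt_iteratedPartialFst (hf : ContDiffOn ℝ ∞ f W) (hW : IsOpen W) (k : ℕ)
    {s : ℝ} {z : E} (h : (s, z) ∈ W) :
    HasDerivAt (fun s => iteratedPartialFst f k (s, z))
      (iteratedPartialFst f (k + 1) (s, z)) s := by
  have hd : DifferentiableAt ℝ (iteratedPartialFst f k) (s, z) :=
    ((hf.iteratedPartialFst hW k).contDiffAt (hW.mem_nhds h)).differentiableAt (by simp)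
  exact hd.hasFDerivAt.comp_hasDerivAt s ((hasDerivAt_id s).prodMk (hasDerivAt_const s z))

end PartialDeriv

lemma iteratedDeriv_eq_of_hasDerivAt_succ {E : Type*} [NormedAddCommGroup E] [NormedSpace ℝ E]
    {F : ℕ → ℝ → E} {U : Set ℝ} (hU : IsOpen U)
    (hF : ∀ k, ∀ s ∈ U, HasDerivAt (F k) (F (k + 1) s) s) (l : ℕ) {s : ℝ} (hs : s ∈ U) :
    iteratedDeriv l (F 0) s = F l s := by
  induction l generalizing s with
  | zero => simp
  | succ l ih =>
    rw [iteratedDeriv_succ, ← (hF l s hs).deriv]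
    exact Filter.EventuallyEq.deriv_eq (Filter.eventually_of_mem (hU.mem_nhds hs) fun _ ht => ih ht)

lemma hasDerivAt_setIntegral_of_continuousOn {α : Type*} [TopologicalSpace α]
    [MeasurableSpace α] [OpensMeasurableSpace α] {μ : Measure α} [IsFiniteMeasureOnCompacts μ]
    {K : Set α} (hK : IsCompact K) (hKm : MeasurableSet K) {U : Set ℝ} (hU : IsOpen U)
    {F F' : ℝ → α → ℝ} (hF : ContinuousOn (uncurry F) (U ×ˢ K))
    (hF' : ContinuousOn (uncurry F') (U ×ˢ K))
    (hd : ∀ s ∈ U, ∀ x ∈ K, HasDerivAt (F · x) (F' s x) s) {s₀ : ℝ} (hs₀ : s₀ ∈ U) :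
    HasDerivAt (fun s => ∫ x in K, F s x ∂μ) (∫ x in K, F' s₀ x ∂μ) s₀ := by
  obtain ⟨ε, hε, hball⟩ := Metric.isOpen_iff.mp hU s₀ hs₀
  have hsub : Metric.closedBall s₀ (ε / 2) ⊆ U :=
    (Metric.closedBall_subset_ball (by linarith)).trans hball
  obtain ⟨M, hM⟩ := ((isCompact_closedBall s₀ (ε / 2)).prod hK).exists_bound_of_continuousOn
    (hF'.mono (prod_mono hsub subset_rfl))
  have hsection : ∀ {G : ℝ → α → ℝ}, ContinuousOn (uncurry G) (U ×ˢ K) →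
      ∀ s ∈ U, ContinuousOn (G s) K := fun hG s hs =>
    hG.comp (continuous_const.prodMk continuous_id).continuousOn fun x hx => ⟨hs, hx⟩
  refine (hasDerivAt_integral_of_dominated_loc_of_deriv_le (bound := fun _ => M)
    (Metric.ball_mem_nhds s₀ (half_pos hε)) ?_ ?_ ?_ ?_ ?_ ?_).2
  · filter_upwards [hU.mem_nhds hs₀] with s hs
    exact (hsection hF s hs).aestronglyMeasurable_of_isCompact hK hKm
  · exact (hsection hF s₀ hs₀).integrableOn_compact' hK hKm
  · exact (hsection hF' s₀ hs₀).aestronglyMeasurable_of_isCompact hK hKm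
  · filter_upwards [ae_restrict_mem hKm] with x hx s hs
    exact hM (s, x) ⟨Metric.ball_subset_closedBall hs, hx⟩
  · exact integrableOn_const hK.measure_ne_top
  · filter_upwards [ae_restrict_mem hKm] with x hx s hs
    exact hd s (hsub (Metric.ball_subset_closedBall hs)) x hx

section Sections

variable {A B : Set ℝ} {g : ℝ × ℝ → ℝ}

lemma integrable_prod_restrict_of_integrableOn (hg : IntegrableOn g (A ×ˢ B)) :
    Integrable g ((volume.restrict A).prod (volume.restrict B)) := by
  rwa [Measure.prod_restrict, ← Measure.volume_eq_prod]

lemma integrableOn_setIntegral_left (hg : IntegrableOn g (A ×ˢ B)) :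
    IntegrableOn (fun t => ∫ x in A, g (x, t)) B :=
  (integrable_prod_restrict_of_integrableOn hg).integral_prod_right

lemma integrableOn_setIntegral_right (hg : IntegrableOn g (A ×ˢ B)) :
    IntegrableOn (fun x => ∫ y in B, g (x, y)) A :=
  (integrable_prod_restrict_of_integrableOn hg).integral_prod_left

lemma setIntegral_setIntegral (hg : IntegrableOn g (A ×ˢ B)) :
    ∫ x in A, ∫ y in B, g (x, y) = ∫ z in A ×ˢ B, g z := by
  rw [Measure.volume_eq_prod]
  exact (setIntegral_prod g hg).symm

lemma setIntegral_setIntegral_swap (hg : IntegrableOn g (A ×ˢ B)) :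
    ∫ t in B, ∫ x in A, g (x, t) = ∫ z in A ×ˢ B, g z := by
  rw [← setIntegral_setIntegral hg]
  exact (integral_integral_swap (f := curry g) (integrable_prod_restrict_of_integrableOn hg)).symm

end Sections

lemma integrable_and_integral_of_ae_eq_indicator {α : Type*} [MeasurableSpace α] {μ : Measure α}
    {f g : α → ℝ} {S : Set α} (hS : MeasurableSet S) (hg : IntegrableOn g S μ)
    (hf : f =ᵐ[μ] S.indicator g) :
    Integrable f μ ∧ ∫ x, f x ∂μ = ∫ x in S, g x ∂μ :=
  ⟨((integrable_indicator_iff hS).2 hg).congr hf.symm,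
    by rw [integral_congr_ae hf, integral_indicator hS]⟩

noncomputable def zeroInflatedDensity (A B : Set ℝ) (c : ℝ) (g₂ g₃ : ℝ → ℝ) (g₄ : ℝ × ℝ → ℝ)
    (y : ℝ × ℝ) : ℝ :=
  Set.indicator {y : ℝ × ℝ | y.1 = 0 ∧ y.2 = 0} (fun _ => c) y
  + Set.indicator {y : ℝ × ℝ | y.1 = 0 ∧ (y.2 ∈ B ∧ y.2 ≠ 0)} (fun y => g₂ y.2) y
  + Set.indicator {y : ℝ × ℝ | (y.1 ∈ A ∧ y.1 ≠ 0) ∧ y.2 = 0} (fun y => g₃ y.1) y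
  + Set.indicator {y : ℝ × ℝ | (y.1 ∈ A ∧ y.1 ≠ 0) ∧ (y.2 ∈ B ∧ y.2 ≠ 0)} g₄ y

section ZeroInflatedDensity

variable {A B : Set ℝ} {c : ℝ} {g₂ g₃ : ℝ → ℝ} {g₄ : ℝ × ℝ → ℝ}

lemma zeroInflatedDensity_zero_zero : zeroInflatedDensity A B c g₂ g₃ g₄ (0, 0) = c := by
  simp [zeroInflatedDensity]

lemma zeroInflatedDensity_zero_left {t : ℝ} (ht : t ≠ 0) :
    zeroInflatedDensity A B c g₂ g₃ g₄ (0, t) = B.indicator g₂ t := by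
  classical
  simp [zeroInflatedDensity, Set.indicator_apply, ht]

lemma zeroInflatedDensity_zero_right {x : ℝ} (hx : x ≠ 0) :
    zeroInflatedDensity A B c g₂ g₃ g₄ (x, 0) = A.indicator g₃ x := by
  classical
  simp [zeroInflatedDensity, Set.indicator_apply, hx]

lemma zeroInflatedDensity_of_ne_zero {y : ℝ × ℝ} (h₁ : y.1 ≠ 0) (h₂ : y.2 ≠ 0) :
    zeroInflatedDensity A B c g₂ g₃ g₄ y = (A ×ˢ B).indicator g₄ y := by
  classical
  simp [zeroInflatedDensity, Set.indicator_apply, h₁, h₂]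

lemma integral_muZI_zeroInflatedDensity (hA : MeasurableSet A) (hB : MeasurableSet B)
    (h₂ : IntegrableOn g₂ B) (h₃ : IntegrableOn g₃ A) (h₄ : IntegrableOn g₄ (A ×ˢ B)) :
    ∫ y, zeroInflatedDensity A B c g₂ g₃ g₄ y ∂muZI
      = c + (∫ t in B, g₂ t) + (∫ x in A, g₃ x) + ∫ z in A ×ˢ B, g₄ z := by
  set f := zeroInflatedDensity A B c g₂ g₃ g₄
  have ae_ne := Measure.ae_ne (volume : Measure ℝ) 0
  obtain ⟨i₁, v₁⟩ : Integrable f ((Measure.dirac 0).prod (Measure.dirac 0)) ∧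
      ∫ y, f y ∂(Measure.dirac 0).prod (Measure.dirac 0) = c := by
    rw [Measure.dirac_prod_dirac, integral_dirac]
    exact ⟨integrable_dirac enorm_lt_top, zeroInflatedDensity_zero_zero⟩
  obtain ⟨i₂, v₂⟩ : Integrable f ((Measure.dirac 0).prod volume) ∧
      ∫ y, f y ∂(Measure.dirac 0).prod volume = ∫ t in B, g₂ t := by
    have e := measurableEmbedding_prodMk_left (β := ℝ) (0 : ℝ)
    rw [Measure.dirac_prod, e.integrable_map_iff, e.integral_map]
    exact integrable_and_integral_of_ae_eq_indicator hB h₂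
      (ae_ne.mono fun t ht => zeroInflatedDensity_zero_left ht)
  obtain ⟨i₃, v₃⟩ : Integrable f (volume.prod (Measure.dirac 0)) ∧
      ∫ y, f y ∂volume.prod (Measure.dirac 0) = ∫ x in A, g₃ x := by
    have e : MeasurableEmbedding fun x : ℝ => (x, (0 : ℝ)) := MeasurableEmbedding.id.prodMk_right 0
    rw [Measure.prod_dirac, e.integrable_map_iff, e.integral_map]
    exact integrable_and_integral_of_ae_eq_indicator hA h₃
      (ae_ne.mono fun x hx => zeroInflatedDensity_zero_right hx)
  obtain ⟨i₄, v₄⟩ : Integrable f (volume.prod volume) ∧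
      ∫ y, f y ∂volume.prod volume = ∫ z in A ×ˢ B, g₄ z :=
    integrable_and_integral_of_ae_eq_indicator (hA.prod hB) h₄ <| by
      filter_upwards [Measure.quasiMeasurePreserving_fst.ae ae_ne,
        Measure.quasiMeasurePreserving_snd.ae ae_ne] with y h₁ h₂
      exact zeroInflatedDensity_of_ne_zero h₁ h₂
  rw [muZI, integral_add_measure ((i₁.add_measure i₂).add_measure i₃) i₄,
    integral_add_measure (i₁.add_measure i₂) i₃, integral_add_measure i₁ i₂, v₁, v₂, v₃, v₄]

lemma integral_muZI_zeroInflatedDensity_sub_sections {m₁ m₂ : ℝ → ℝ} (hA : MeasurableSet A)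
    (hB : MeasurableSet B) (hg : IntegrableOn g₄ (A ×ˢ B)) (h₁ : IntegrableOn m₁ A)
    (h₂ : IntegrableOn m₂ B) (c : ℝ) :
    ∫ y, zeroInflatedDensity A B (c + ∫ z in A ×ˢ B, g₄ z) (fun t => m₂ t - ∫ x in A, g₄ (x, t))
      (fun x => m₁ x - ∫ y in B, g₄ (x, y)) g₄ y ∂muZI = c + (∫ t in B, m₂ t) + ∫ x in A, m₁ x := by
  have hU := integrableOn_setIntegral_left hg
  have hT := integrableOn_setIntegral_right hg
  have h₂' : IntegrableOn (fun t => m₂ t - ∫ x in A, g₄ (x, t)) B := h₂.sub hU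
  have h₁' : IntegrableOn (fun x => m₁ x - ∫ y in B, g₄ (x, y)) A := h₁.sub hT
  rw [integral_muZI_zeroInflatedDensity hA hB h₂' h₁' hg, integral_sub h₂ hU,
    integral_sub h₁ hT, setIntegral_setIntegral_swap hg, setIntegral_setIntegral hg]
  ring

end ZeroInflatedDensity

lemma iteratedDeriv_zeroInflatedDensity {A B : Set ℝ} (l : ℕ) (c : ℝ → ℝ) (g₂ g₃ : ℝ → ℝ → ℝ)
    (g₄ : ℝ → ℝ × ℝ → ℝ) (σ : ℝ) (y : ℝ × ℝ) :
    iteratedDeriv l (fun s => zeroInflatedDensity A B (c s) (g₂ s) (g₃ s) (g₄ s) y) σ =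
      zeroInflatedDensity A B (iteratedDeriv l c σ) (fun t => iteratedDeriv l (g₂ · t) σ)
        (fun x => iteratedDeriv l (g₃ · x) σ) (fun z => iteratedDeriv l (g₄ · z) σ) y := by
  classical
  obtain ⟨x, t⟩ := y
  by_cases hx : x = 0 <;> by_cases ht : t = 0 <;> by_cases hA : x ∈ A <;> by_cases hB : t ∈ B <;>
    simp [zeroInflatedDensity, hx, ht, hA, hB]

section BivariateGaussian

variable {s : ℝ}

lemma one_sub_sq_pos_of_mem_Ioo (hs : s ∈ Ioo (-1 : ℝ) 1) : 0 < 1 - s ^ 2 := by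
  nlinarith [hs.1, hs.2]

lemma bivGauss_comm (s x y : ℝ) : bivGauss s x y = bivGauss s y x := by
  unfold bivGauss; ring_nf

lemma bivGauss_nonneg (s x y : ℝ) : 0 ≤ bivGauss s x y := by
  unfold bivGauss; positivity

lemma bivGauss_eq_gaussianPDFReal_mul (hs : s ∈ Ioo (-1 : ℝ) 1) (x y : ℝ) :
    bivGauss s x y = gaussianPDFReal 0 1 x *
      gaussianPDFReal (s * x) (1 - s ^ 2).toNNReal y := by
  have hv := one_sub_sq_pos_of_mem_Ioo hs
  have hπ : 0 < 2 * π := by positivity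
  simp only [bivGauss, gaussianPDFReal, NNReal.coe_one, Real.coe_toNNReal _ hv.le]
  rw [mul_mul_mul_comm, ← Real.exp_add, mul_one, Real.sqrt_mul hπ.le, ← mul_inv, ← mul_assoc,
    Real.mul_self_sqrt hπ.le, one_div]
  congr 2
  field_simp
  ring

lemma integrable_bivGauss_right (hs : s ∈ Ioo (-1 : ℝ) 1) (x : ℝ) :
    Integrable (bivGauss s x) := by
  rw [funext (bivGauss_eq_gaussianPDFReal_mul hs x)]
  exact (integrable_gaussianPDFReal _ _).const_mul _

lemma integral_bivGauss_right (hs : s ∈ Ioo (-1 : ℝ) 1) (x : ℝ) :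
    ∫ y, bivGauss s x y = gaussianPDFReal 0 1 x := by
  simp_rw [bivGauss_eq_gaussianPDFReal_mul hs x]
  rw [integral_const_mul, integral_gaussianPDFReal_eq_one _ (by
    simpa using one_sub_sq_pos_of_mem_Ioo hs), mul_one]

lemma integrable_bivGauss_left (hs : s ∈ Ioo (-1 : ℝ) 1) (y : ℝ) :
    Integrable (fun x => bivGauss s x y) := by
  simpa only [bivGauss_comm s _ y] using integrable_bivGauss_right hs y

lemma integral_bivGauss_left (hs : s ∈ Ioo (-1 : ℝ) 1) (y : ℝ) :
    ∫ x, bivGauss s x y = gaussianPDFReal 0 1 y := by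
  simpa only [bivGauss_comm s _ y] using integral_bivGauss_right hs y

lemma continuous_uncurry_bivGauss (s : ℝ) : Continuous (uncurry (bivGauss s)) := by
  unfold uncurry bivGauss; fun_prop

lemma integrable_uncurry_bivGauss (hs : s ∈ Ioo (-1 : ℝ) 1) :
    Integrable (uncurry (bivGauss s)) (volume.prod volume) := by
  refine (integrable_prod_iff (continuous_uncurry_bivGauss s).aestronglyMeasurable).2
    ⟨.of_forall (integrable_bivGauss_right hs), ?_⟩
  simp only [uncurry_apply_pair, Real.norm_of_nonneg (bivGauss_nonneg _ _ _),
    integral_bivGauss_right hs]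
  exact integrable_gaussianPDFReal 0 1

lemma contDiffOn_bivGauss :
    ContDiffOn ℝ ∞ (fun p : ℝ × ℝ × ℝ => bivGauss p.1 p.2.1 p.2.2) (Ioo (-1) 1 ×ˢ univ) := by
  unfold bivGauss
  fun_prop (disch := (rintro ⟨s, x, y⟩ ⟨hs, -⟩; have := one_sub_sq_pos_of_mem_Ioo hs; positivity))

end BivariateGaussian

noncomputable def bivGaussDeriv (k : ℕ) : ℝ × ℝ × ℝ → ℝ :=
  iteratedPartialFst (fun p => bivGauss p.1 p.2.1 p.2.2) k

lemma continuousOn_bivGaussDeriv (k : ℕ) :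
    ContinuousOn (bivGaussDeriv k) (Ioo (-1) 1 ×ˢ univ) :=
  (contDiffOn_bivGauss.iteratedPartialFst (isOpen_Ioo.prod isOpen_univ) k).continuousOn

lemma continuous_bivGaussDeriv_right (k : ℕ) {s : ℝ} (hs : s ∈ Ioo (-1 : ℝ) 1) :
    Continuous fun z => bivGaussDeriv k (s, z) :=
  (continuousOn_bivGaussDeriv k).comp_continuous (by fun_prop) fun z => ⟨hs, mem_univ z⟩

lemma hasDerivAt_bivGaussDeriv (k : ℕ) {s : ℝ} (hs : s ∈ Ioo (-1 : ℝ) 1) (z : ℝ × ℝ) :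
    HasDerivAt (fun s => bivGaussDeriv k (s, z)) (bivGaussDeriv (k + 1) (s, z)) s :=
  hasDerivAt_iteratedPartialFst contDiffOn_bivGauss (isOpen_Ioo.prod isOpen_univ) k ⟨hs, mem_univ z⟩

lemma iteratedDeriv_bivGauss (l : ℕ) {σ : ℝ} (hσ : σ ∈ Ioo (-1 : ℝ) 1) (z : ℝ × ℝ) :
    iteratedDeriv l (fun s => uncurry (bivGauss s) z) σ = bivGaussDeriv l (σ, z) :=
  iteratedDeriv_eq_of_hasDerivAt_succ (F := fun k s => bivGaussDeriv k (s, z)) isOpen_Ioo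
    (fun k _ hs => hasDerivAt_bivGaussDeriv k hs z) l hσ

lemma iteratedDeriv_setIntegral_bivGauss {α : Type*} [TopologicalSpace α] [MeasurableSpace α]
    [OpensMeasurableSpace α] {μ : Measure α} [IsFiniteMeasureOnCompacts μ] {K : Set α}
    (hK : IsCompact K) (hKm : MeasurableSet K) {e : α → ℝ × ℝ} (he : Continuous e) (l : ℕ)
    {σ : ℝ} (hσ : σ ∈ Ioo (-1 : ℝ) 1) :
    iteratedDeriv l (fun s => ∫ x in K, bivGauss s (e x).1 (e x).2 ∂μ) σ =
      ∫ x in K, bivGaussDeriv l (σ, e x) ∂μ := by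
  have hcont : ∀ k, ContinuousOn (uncurry fun s x => bivGaussDeriv k (s, e x)) (Ioo (-1) 1 ×ˢ K) :=
    fun k => (continuousOn_bivGaussDeriv k).comp (by fun_prop) fun p hp => ⟨hp.1, mem_univ _⟩
  exact iteratedDeriv_eq_of_hasDerivAt_succ (F := fun k s => ∫ x in K, bivGaussDeriv k (s, e x) ∂μ)
    isOpen_Ioo (fun k _ hs => hasDerivAt_setIntegral_of_continuousOn hK hKm isOpen_Ioo (hcont k)
      (hcont (k + 1)) (fun s hs x _ => hasDerivAt_bivGaussDeriv k hs (e x)) hs) l hσ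

section Phi

variable {s : ℝ} (a₁ b₁ a₂ b₂ : ℝ)

lemma phi01_eq (hs : s ∈ Ioo (-1 : ℝ) 1) (t : ℝ) :
    phi01 a₁ b₁ s t = gaussianPDFReal 0 1 t - ∫ x in Icc a₁ b₁, bivGauss s x t := by
  rw [phi01, setIntegral_compl measurableSet_Icc (integrable_bivGauss_left hs t),
    integral_bivGauss_left hs t]

lemma phi10_eq (hs : s ∈ Ioo (-1 : ℝ) 1) (x : ℝ) :
    phi10 a₂ b₂ s x = gaussianPDFReal 0 1 x - ∫ y in Icc a₂ b₂, bivGauss s x y := by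
  rw [phi10, setIntegral_compl measurableSet_Icc (integrable_bivGauss_right hs x),
    integral_bivGauss_right hs x]

lemma phi00_eq (hs : s ∈ Ioo (-1 : ℝ) 1) :
    phi00 a₁ b₁ a₂ b₂ s = (∫ x in (Icc a₁ b₁)ᶜ, gaussianPDFReal 0 1 x)
      - (∫ y in Icc a₂ b₂, gaussianPDFReal 0 1 y)
      + ∫ z in Icc a₁ b₁ ×ˢ Icc a₂ b₂, uncurry (bivGauss s) z := by
  have hint : Integrable (uncurry (bivGauss s)) (volume.prod (volume.restrict (Icc a₂ b₂))) := by
    have := (integrable_uncurry_bivGauss hs).restrict (s := univ ×ˢ Icc a₂ b₂)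
    rwa [← Measure.prod_restrict, Measure.restrict_univ] at this
  have hsec : Integrable fun x => ∫ y in Icc a₂ b₂, bivGauss s x y := hint.integral_prod_left
  have hmarg : ∫ x, ∫ y in Icc a₂ b₂, bivGauss s x y = ∫ y in Icc a₂ b₂, gaussianPDFReal 0 1 y := by
    rw [integral_integral_swap hint]
    exact setIntegral_congr_fun measurableSet_Icc fun y _ => integral_bivGauss_left hs y
  change ∫ x in (Icc a₁ b₁)ᶜ, phi10 a₂ b₂ s x = _
  simp_rw [phi10_eq a₂ b₂ hs]
  rw [integral_sub (integrable_gaussianPDFReal 0 1).integrableOn hsec.integrableOn,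
    setIntegral_compl measurableSet_Icc hsec, hmarg,
    ← setIntegral_setIntegral (integrable_uncurry_bivGauss hs).integrableOn]
  simp only [uncurry_apply_pair]
  ring

end Phi

lemma ZIL_eq_zeroInflatedDensity (a₁ b₁ a₂ b₂ σ : ℝ) :
    ZIL a₁ b₁ a₂ b₂ σ = zeroInflatedDensity (Icc a₁ b₁) (Icc a₂ b₂) (phi00 a₁ b₁ a₂ b₂ σ)
      (phi01 a₁ b₁ σ) (phi10 a₂ b₂ σ) (uncurry (bivGauss σ)) := rfl

section Likelihood

variable (a₁ b₁ a₂ b₂ : ℝ) {l : ℕ} {σ : ℝ}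

lemma integral_ZIL_eq_one {s : ℝ} (hs : s ∈ Ioo (-1 : ℝ) 1) :
    ∫ y, ZIL a₁ b₁ a₂ b₂ s y ∂muZI = 1 := by
  have hφ := integrable_gaussianPDFReal 0 1
  rw [ZIL_eq_zeroInflatedDensity, phi00_eq a₁ b₁ a₂ b₂ hs, funext (phi01_eq a₁ b₁ hs),
    funext (phi10_eq a₂ b₂ hs)]
  refine (integral_muZI_zeroInflatedDensity_sub_sections (g₄ := uncurry (bivGauss s))
    measurableSet_Icc measurableSet_Icc (integrable_uncurry_bivGauss hs).integrableOn
    hφ.integrableOn hφ.integrableOn _).trans ?_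
  rw [sub_add_cancel, add_comm, integral_add_compl measurableSet_Icc hφ,
    integral_gaussianPDFReal_eq_one 0 one_ne_zero]

lemma iteratedDeriv_phi00 (hl : 0 < l) (hσ : σ ∈ Ioo (-1 : ℝ) 1) :
    iteratedDeriv l (phi00 a₁ b₁ a₂ b₂) σ =
      ∫ z in Icc a₁ b₁ ×ˢ Icc a₂ b₂, bivGaussDeriv l (σ, z) := by
  have h : EqOn (phi00 a₁ b₁ a₂ b₂) _ (Ioo (-1) 1) := fun s hs => phi00_eq a₁ b₁ a₂ b₂ hs
  rw [h.iteratedDeriv_of_isOpen isOpen_Ioo l hσ, iteratedDeriv_const_add hl]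
  exact iteratedDeriv_setIntegral_bivGauss (isCompact_Icc.prod isCompact_Icc)
    (measurableSet_Icc.prod measurableSet_Icc) continuous_id l hσ

lemma iteratedDeriv_phi01 (hl : 0 < l) (hσ : σ ∈ Ioo (-1 : ℝ) 1) (t : ℝ) :
    iteratedDeriv l (fun s => phi01 a₁ b₁ s t) σ =
      -∫ x in Icc a₁ b₁, bivGaussDeriv l (σ, (x, t)) := by
  have h : EqOn (fun s => phi01 a₁ b₁ s t) _ (Ioo (-1) 1) := fun s hs => phi01_eq a₁ b₁ hs t
  rw [h.iteratedDeriv_of_isOpen isOpen_Ioo l hσ, iteratedDeriv_const_sub hl, iteratedDeriv_neg]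
  exact congrArg Neg.neg (iteratedDeriv_setIntegral_bivGauss isCompact_Icc measurableSet_Icc
    (e := fun x => (x, t)) (by fun_prop) l hσ)

lemma iteratedDeriv_phi10 (hl : 0 < l) (hσ : σ ∈ Ioo (-1 : ℝ) 1) (x : ℝ) :
    iteratedDeriv l (fun s => phi10 a₂ b₂ s x) σ =
      -∫ y in Icc a₂ b₂, bivGaussDeriv l (σ, (x, y)) := by
  have h : EqOn (fun s => phi10 a₂ b₂ s x) _ (Ioo (-1) 1) := fun s hs => phi10_eq a₂ b₂ hs x
  rw [h.iteratedDeriv_of_isOpen isOpen_Ioo l hσ, iteratedDeriv_const_sub hl, iteratedDeriv_neg]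
  exact congrArg Neg.neg (iteratedDeriv_setIntegral_bivGauss isCompact_Icc measurableSet_Icc
    (e := fun y => (x, y)) (by fun_prop) l hσ)

lemma iteratedDeriv_ZIL (hl : 0 < l) (hσ : σ ∈ Ioo (-1 : ℝ) 1) :
    (fun y => iteratedDeriv l (fun s => ZIL a₁ b₁ a₂ b₂ s y) σ) =
      zeroInflatedDensity (Icc a₁ b₁) (Icc a₂ b₂)
        (∫ z in Icc a₁ b₁ ×ˢ Icc a₂ b₂, bivGaussDeriv l (σ, z))
        (fun t => -∫ x in Icc a₁ b₁, bivGaussDeriv l (σ, (x, t)))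
        (fun x => -∫ y in Icc a₂ b₂, bivGaussDeriv l (σ, (x, y)))
        (fun z => bivGaussDeriv l (σ, z)) := by
  funext y
  simp only [ZIL_eq_zeroInflatedDensity, iteratedDeriv_zeroInflatedDensity,
    iteratedDeriv_phi00 a₁ b₁ a₂ b₂ hl hσ, iteratedDeriv_phi01 a₁ b₁ hl hσ,
    iteratedDeriv_phi10 a₂ b₂ hl hσ, iteratedDeriv_bivGauss l hσ]

lemma integral_iteratedDeriv_ZIL (hl : 0 < l) (hσ : σ ∈ Ioo (-1 : ℝ) 1) :
    ∫ y, iteratedDeriv l (fun s => ZIL a₁ b₁ a₂ b₂ s y) σ ∂muZI = 0 := by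
  have hg : IntegrableOn (fun z => bivGaussDeriv l (σ, z)) (Icc a₁ b₁ ×ˢ Icc a₂ b₂) :=
    (continuous_bivGaussDeriv_right l hσ).continuousOn.integrableOn_compact
      (isCompact_Icc.prod isCompact_Icc)
  rw [iteratedDeriv_ZIL a₁ b₁ a₂ b₂ hl hσ]
  simpa using integral_muZI_zeroInflatedDensity_sub_sections (m₁ := 0) (m₂ := 0)
    measurableSet_Icc measurableSet_Icc hg integrableOn_zero integrableOn_zero 0

end Likelihood

theorem stmt6_general (δ a₁ b₁ a₂ b₂ : ℝ) (hδ : δ ∈ Ioo (0 : ℝ) 1) :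
    ∀ σ ∈ Icc (-1 + δ) (1 - δ), ∀ l : ℕ, 1 ≤ l → l ≤ 3 →
      (∫ y, iteratedDeriv l (fun s => ZIL a₁ b₁ a₂ b₂ s y) σ ∂muZI =
        iteratedDeriv l (fun s => ∫ y, ZIL a₁ b₁ a₂ b₂ s y ∂muZI) σ) ∧
      iteratedDeriv l (fun s => ∫ y, ZIL a₁ b₁ a₂ b₂ s y ∂muZI) σ = 0 := by
  intro σ hσ l hl _
  have hσ' : σ ∈ Ioo (-1 : ℝ) 1 := ⟨by linarith [hσ.1, hδ.1], by linarith [hσ.2, hδ.1]⟩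
  have hconst : EqOn (fun s => ∫ y, ZIL a₁ b₁ a₂ b₂ s y ∂muZI) (fun _ => 1) (Ioo (-1) 1) :=
    fun s hs => integral_ZIL_eq_one a₁ b₁ a₂ b₂ hs
  have hrhs : iteratedDeriv l (fun s => ∫ y, ZIL a₁ b₁ a₂ b₂ s y ∂muZI) σ = 0 := by
    rw [hconst.iteratedDeriv_of_isOpen isOpen_Ioo l hσ', iteratedDeriv_const, if_neg (by omega)]
  exact ⟨by rw [hrhs, integral_iteratedDeriv_ZIL a₁ b₁ a₂ b₂ hl hσ'], hrhs⟩

theorem stmt6 (δ a₁ b₁ a₂ b₂ : ℝ) (hδ : δ ∈ Ioo (0 : ℝ) 1)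
    (h₁ : a₁ < b₁) (h₂ : a₂ < b₂) :
    ∀ σ ∈ Icc (-1 + δ) (1 - δ), ∀ l : ℕ, 1 ≤ l → l ≤ 3 →
      (∫ y, iteratedDeriv l (fun s => ZIL a₁ b₁ a₂ b₂ s y) σ ∂muZI =
        iteratedDeriv l (fun s => ∫ y, ZIL a₁ b₁ a₂ b₂ s y ∂muZI) σ) ∧
      iteratedDeriv l (fun s => ∫ y, ZIL a₁ b₁ a₂ b₂ s y ∂muZI) σ = 0 :=
  stmt6_general δ a₁ b₁ a₂ b₂ hδ
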